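/- arXiv:2107.14294 — 6 statements merged into one kernel-verified Lean document; each statement's English description precedes it below -/
import Mathlib

section
/- Let $H > 1/3$. Then the double integral $\int_0^\infty \int_0^\infty (s_1 s_2)^{H-1/2} (s_1^{2H} + |s_2-s_1|^{2H})^{-3/2} (1 \vee \sqrt{s_1^{2H} + |s_2-s_1|^{2H}})^{-2} \, ds_1 \, ds_2$ is finite. -/
open MeasureTheory Set

/-!
With `Q = x^{2H} + |y - x|^{2H}` we have `x^H ≤ √Q` and, by subadditivity of `t ↦ t^H`,
`y^H ≤ x^H + |y - x|^H ≤ 2√Q`. Hence the integrand is at most `8 g(x) g(y)` with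
`g(t) = t^{-(1+H)/2} / max(1, t^H)`, and Tonelli factors the integral. The function `g` is
integrable near `0` since `(1 + H)/2 < 1`, and near `∞` since `(1 + 3H)/2 > 1`, i.e. `H > 1/3`.
-/

theorem integrableOn_Ioi_rpow_div_max_one_rpow {a b : ℝ} (ha : -1 < a) (hab : a - b < -1) :
    IntegrableOn (fun t : ℝ => t ^ a / max 1 (t ^ b)) (Ioi 0) := by
  have hcont : ContinuousOn (fun t : ℝ => t ^ a / max 1 (t ^ b)) (Ioi 0) := by
    refine ContinuousOn.div ?_ ?_ fun t _ => (zero_lt_one.trans_le (le_max_left _ _)).ne'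
    · exact continuousOn_id.rpow_const fun t ht => Or.inl (ne_of_gt ht)
    · exact continuousOn_const.sup (continuousOn_id.rpow_const fun t ht => Or.inl (ne_of_gt ht))
  rw [← Ioo_union_Ici_eq_Ioi zero_lt_one]
  refine IntegrableOn.union ?_ ?_
  · refine ((intervalIntegral.integrableOn_Ioo_rpow_iff zero_lt_one).2 ha).mono'
      ((hcont.mono Ioo_subset_Ioi_self).aestronglyMeasurable measurableSet_Ioo) ?_
    refine ae_restrict_of_forall_mem measurableSet_Ioo fun t ht => ?_
    have hta : 0 ≤ t ^ a := Real.rpow_nonneg ht.1.le a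
    rw [Real.norm_eq_abs, abs_of_nonneg (by positivity)]
    exact div_le_self hta (le_max_left _ _)
  · have hdom : IntegrableOn (fun t : ℝ => t ^ (a - b)) (Ici 1) :=
      (integrableOn_Ioi_rpow_of_lt hab zero_lt_one).congr_set_ae Ioi_ae_eq_Ici.symm
    refine hdom.mono'
      ((hcont.mono (Ici_subset_Ioi.2 zero_lt_one)).aestronglyMeasurable measurableSet_Ici) ?_
    refine ae_restrict_of_forall_mem measurableSet_Ici fun t ht => ?_
    have ht0 : 0 < t := zero_lt_one.trans_le ht
    rw [Real.norm_eq_abs, abs_of_nonneg (by positivity), Real.rpow_sub ht0]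
    exact div_le_div_of_nonneg_left (Real.rpow_nonneg ht0.le a) (Real.rpow_pos_of_pos ht0 b)
      (le_max_right _ _)

lemma rpow_le_sqrt_rpow_two_mul_add {u v p : ℝ} (hu : 0 ≤ u) (hv : 0 ≤ v) :
    u ^ p ≤ √(u ^ (2 * p) + v ^ (2 * p)) := by
  refine Real.le_sqrt_of_sq_le ?_
  rw [← Real.rpow_natCast, ← Real.rpow_mul hu, Nat.cast_ofNat, mul_comm]
  exact le_add_of_nonneg_right (Real.rpow_nonneg hv _)

lemma rpow_le_two_mul_sqrt_rpow_two_mul_add_abs_sub {x y p : ℝ} (hx : 0 ≤ x) (hy : 0 ≤ y)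
    (hp0 : 0 ≤ p) (hp1 : p ≤ 1) :
    y ^ p ≤ 2 * √(x ^ (2 * p) + |y - x| ^ (2 * p)) := by
  calc y ^ p ≤ (x + |y - x|) ^ p :=
        Real.rpow_le_rpow hy (by linarith [le_abs_self (y - x)]) hp0
    _ ≤ x ^ p + |y - x| ^ p := Real.rpow_add_le_add_rpow hx (abs_nonneg _) hp0 hp1
    _ ≤ 2 * √(x ^ (2 * p) + |y - x| ^ (2 * p)) := by
        have hx' := rpow_le_sqrt_rpow_two_mul_add (p := p) hx (abs_nonneg (y - x))
        have hu' := rpow_le_sqrt_rpow_two_mul_add (p := p) (abs_nonneg (y - x)) hx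
        rw [add_comm (|y - x| ^ _)] at hu'
        linarith

lemma rpow_neg_three_halves_mul_max_one_sqrt_le {Q a b : ℝ} (ha : 0 < a) (hb : 0 < b)
    (haQ : a ≤ √Q) (hbQ : b ≤ 2 * √Q) :
    Q ^ (-(3 : ℝ) / 2) * max 1 √Q ^ (-(2 : ℝ))
      ≤ 8 * (a * b) ^ (-(3 : ℝ) / 2) / (max 1 a * max 1 b) := by
  have hQ : 0 < Q := Real.sqrt_pos.1 (ha.trans_le haQ)
  have hab : a * b / 2 ≤ Q := by nlinarith [Real.mul_self_sqrt hQ.le]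
  have hpow : Q ^ (-(3 : ℝ) / 2) ≤ 4 * (a * b) ^ (-(3 : ℝ) / 2) :=
    calc Q ^ (-(3 : ℝ) / 2) ≤ (a * b / 2) ^ (-(3 : ℝ) / 2) :=
          Real.rpow_le_rpow_of_nonpos (by positivity) hab (by norm_num)
      _ = 2 ^ ((3 : ℝ) / 2) * (a * b) ^ (-(3 : ℝ) / 2) := by
          rw [Real.div_rpow (by positivity) zero_le_two, neg_div, Real.rpow_neg zero_le_two,
            div_inv_eq_mul, mul_comm]
      _ ≤ 4 * (a * b) ^ (-(3 : ℝ) / 2) := by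
          gcongr
          calc (2 : ℝ) ^ ((3 : ℝ) / 2) ≤ 2 ^ (2 : ℝ) :=
                Real.rpow_le_rpow_of_exponent_le one_le_two (by norm_num)
            _ = 4 := by norm_num
  have hmax : max 1 a * max 1 b ≤ 2 * max 1 √Q ^ 2 := by
    have h1 : max 1 a ≤ max 1 √Q := max_le_max le_rfl haQ
    have h2 : max 1 b ≤ 2 * max 1 √Q :=
      max_le (by linarith [le_max_left 1 √Q]) (hbQ.trans (by linarith [le_max_right 1 √Q]))
    nlinarith [le_max_left 1 a, le_max_left 1 b]
  have hcut : max 1 √Q ^ (-(2 : ℝ)) ≤ 2 / (max 1 a * max 1 b) := by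
    rw [Real.rpow_neg (by positivity), Real.rpow_two, inv_eq_one_div,
      div_le_div_iff₀ (by positivity) (by positivity)]
    linarith
  calc Q ^ (-(3 : ℝ) / 2) * max 1 √Q ^ (-(2 : ℝ))
      ≤ 4 * (a * b) ^ (-(3 : ℝ) / 2) * (2 / (max 1 a * max 1 b)) :=
        mul_le_mul hpow hcut (by positivity) (by positivity)
    _ = 8 * (a * b) ^ (-(3 : ℝ) / 2) / (max 1 a * max 1 b) := by ring

lemma integrand_le_mul {H x y : ℝ} (hH0 : 0 < H) (hH1 : H ≤ 1) (hx : 0 < x) (hy : 0 < y) :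
    (x * y) ^ (H - 1 / 2) * (x ^ (2 * H) + |y - x| ^ (2 * H)) ^ (-(3 : ℝ) / 2)
        * (max 1 √(x ^ (2 * H) + |y - x| ^ (2 * H))) ^ (-(2 : ℝ))
      ≤ 8 * (x ^ (-(1 + H) / 2) / max 1 (x ^ H)) * (y ^ (-(1 + H) / 2) / max 1 (y ^ H)) := by
  have hxy : 0 < x * y := mul_pos hx hy
  have hkey := rpow_neg_three_halves_mul_max_one_sqrt_le (Real.rpow_pos_of_pos hx H)
    (Real.rpow_pos_of_pos hy H) (rpow_le_sqrt_rpow_two_mul_add hx.le (abs_nonneg (y - x)))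
    (rpow_le_two_mul_sqrt_rpow_two_mul_add_abs_sub hx.le hy.le hH0.le hH1)
  have hexp : (x * y) ^ (H - 1 / 2) * (x ^ H * y ^ H) ^ (-(3 : ℝ) / 2)
      = x ^ (-(1 + H) / 2) * y ^ (-(1 + H) / 2) := by
    rw [← Real.mul_rpow hx.le hy.le, ← Real.rpow_mul hxy.le, ← Real.rpow_add hxy,
      ← Real.mul_rpow hx.le hy.le]
    ring_nf
  calc _ = (x * y) ^ (H - 1 / 2) * ((x ^ (2 * H) + |y - x| ^ (2 * H)) ^ (-(3 : ℝ) / 2)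
        * (max 1 √(x ^ (2 * H) + |y - x| ^ (2 * H))) ^ (-(2 : ℝ))) := mul_assoc _ _ _
    _ ≤ (x * y) ^ (H - 1 / 2) * (8 * (x ^ H * y ^ H) ^ (-(3 : ℝ) / 2)
          / (max 1 (x ^ H) * max 1 (y ^ H))) := by gcongr
    _ = _ := by rw [mul_div_assoc', mul_left_comm, hexp]; ring

/-- For `H > 1/3`, the integral
`∫₀^∞∫₀^∞ (s₁s₂)^{H-1/2} (s₁^{2H}+|s₂-s₁|^{2H})^{-3/2} (1 ∨ √(s₁^{2H}+|s₂-s₁|^{2H}))^{-2} ds₁ ds₂`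
is finite. -/
theorem stmt4 (H : ℝ) (hH : 1 / 3 < H) (hH1 : H < 1) :
    (∫⁻ s in Set.Ioi (0 : ℝ) ×ˢ Set.Ioi (0 : ℝ),
      ENNReal.ofReal ((s.1 * s.2) ^ (H - 1 / 2)
        * (s.1 ^ (2 * H) + |s.2 - s.1| ^ (2 * H)) ^ (-(3 : ℝ) / 2)
        * (max 1 (Real.sqrt (s.1 ^ (2 * H) + |s.2 - s.1| ^ (2 * H)))) ^ (-(2 : ℝ)))) < ⊤ := by
  set g : ℝ → ℝ := fun t => t ^ (-(1 + H) / 2) / max 1 (t ^ H)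
  have hg : IntegrableOn g (Ioi 0) :=
    integrableOn_Ioi_rpow_div_max_one_rpow (by linarith) (by linarith)
  have hg_meas : Measurable fun t => ENNReal.ofReal (g t) := by fun_prop
  calc _ ≤ ∫⁻ s in Ioi (0 : ℝ) ×ˢ Ioi (0 : ℝ),
          ENNReal.ofReal 8 * (ENNReal.ofReal (g s.1) * ENNReal.ofReal (g s.2)) := by
        refine setLIntegral_mono' (measurableSet_Ioi.prod measurableSet_Ioi)
          fun s ⟨hx, hy⟩ => ?_
        have hgx : 0 ≤ g s.1 := div_nonneg (Real.rpow_nonneg hx.le _) (by positivity)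
        rw [← ENNReal.ofReal_mul hgx, ← ENNReal.ofReal_mul (by norm_num), ← mul_assoc]
        exact ENNReal.ofReal_le_ofReal (integrand_le_mul (by linarith) hH1.le hx hy)
    _ = ENNReal.ofReal 8 * ((∫⁻ t in Ioi 0, ENNReal.ofReal (g t))
          * ∫⁻ t in Ioi 0, ENNReal.ofReal (g t)) := by
        rw [Measure.volume_eq_prod, ← Measure.prod_restrict,
          lintegral_const_mul' _ _ ENNReal.ofReal_ne_top,
          lintegral_prod_mul hg_meas.aemeasurable hg_meas.aemeasurable]
    _ < ⊤ := by finiteness [hg.lintegral_lt_top]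
end

section
/- Let $f: \mathbb{R} \to \mathbb{R}$ be measurable with $\|f\|_w := \int_{\mathbb{R}} |f(x)|(1+|x|^w)\,dx < \infty$ for $w = a$ and $w = b$, where $a, b, c, \sigma > 0$. Then there is a constant $C$ (depending only on $a,b,c$) such that $\int_{\mathbb{R}^3} |f(x) f(\tilde{x})| (1 \wedge |x\eta|)^a (1 \wedge |\eta \tilde{x}|)^b |\eta|^c e^{-\sigma^2 \eta^2} \, d\eta \, dx \, d\tilde{x} \le \frac{C}{\sigma^{1+c} (1 \vee \sigma)^{a+b}} \|f\|_a \|f\|_b$. -/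
/-!
Since `1 ∧ |xη| ≤ (1 ∨ |x|)(1 ∧ |η|)` and `(1 ∨ |x|)^t ≤ 1 + |x|^t`, the integrand is bounded by
`|f(x)|(1 + |x|^a) · |f(x̃)|(1 + |x̃|^b) · (1 ∧ |η|)^(a+b) |η|^c e^{-σ²η²}`, so by Tonelli the
triple integral is at most `‖f‖_a ‖f‖_b` times a one-dimensional integral in `η`. In that integral
`(1 ∧ |η|)(1 ∨ σ) ≤ 1 ∨ |ση|`, and the substitution `u = ση` produces the factor
`σ^{-(1+c)} (1 ∨ σ)^{-(a+b)}` in front of `∫ (1 ∨ |u|)^(a+b) |u|^c e^{-u²} du < ∞`.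
-/

open MeasureTheory Real Set

section Elementary

variable {x y : ℝ}

lemma min_one_mul_le_max_one_mul_min_one (hx : 0 ≤ x) (hy : 0 ≤ y) :
    min 1 (x * y) ≤ max 1 x * min 1 y := by
  rcases le_total x 1 with h | h
  · rw [max_eq_left h, one_mul]
    exact min_le_min le_rfl (mul_le_of_le_one_left hy h)
  · rw [max_eq_right h, mul_min_of_nonneg _ _ hx, mul_one]
    exact min_le_min h le_rfl

lemma min_one_mul_max_one_le_max_one_mul (hx : 0 ≤ x) :
    min 1 y * max 1 x ≤ max 1 (x * y) := by
  rcases le_total x 1 with h | h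
  · rw [max_eq_left h, mul_one]
    exact (min_le_left _ _).trans (le_max_left _ _)
  · rw [max_eq_right h, mul_comm x y]
    exact (mul_le_mul_of_nonneg_right (min_le_right _ _) hx).trans (le_max_right _ _)

lemma max_one_rpow_le_one_add_rpow (hx : 0 ≤ x) (t : ℝ) : max 1 x ^ t ≤ 1 + x ^ t := by
  rcases le_total x 1 with h | h
  · rw [max_eq_left h, one_rpow]
    linarith [rpow_nonneg hx t]
  · rw [max_eq_right h]
    linarith

lemma max_one_rpow_mul_rpow_le (hx : 0 ≤ x) (p c : ℝ) :
    max 1 x ^ p * x ^ c ≤ x ^ c + x ^ (p + c) := by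
  rcases le_total x 1 with h | h
  · rw [max_eq_left h, one_rpow, one_mul]
    linarith [rpow_nonneg hx (p + c)]
  · rw [max_eq_right h, ← rpow_add (by linarith)]
    linarith [rpow_nonneg hx c]

end Elementary

lemma min_one_abs_mul_rpow_le {t : ℝ} (ht : 0 ≤ t) (x η : ℝ) :
    min 1 |x * η| ^ t ≤ (1 + |x| ^ t) * min 1 |η| ^ t := by
  have hη : 0 ≤ min 1 |η| := le_min zero_le_one (abs_nonneg η)
  calc min 1 |x * η| ^ t ≤ (max 1 |x| * min 1 |η|) ^ t := by
        rw [abs_mul]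
        exact rpow_le_rpow (le_min zero_le_one (by positivity))
          (min_one_mul_le_max_one_mul_min_one (abs_nonneg x) (abs_nonneg η)) ht
    _ = max 1 |x| ^ t * min 1 |η| ^ t := mul_rpow (zero_le_one.trans (le_max_left _ _)) hη
    _ ≤ (1 + |x| ^ t) * min 1 |η| ^ t := by
        gcongr
        exact max_one_rpow_le_one_add_rpow (abs_nonneg x) t

lemma abs_mul_mul_min_one_rpow_mul_min_one_rpow_le {a b w₁ w₂ : ℝ} (ha : 0 ≤ a) (hb : 0 ≤ b)
    (hw₁ : 0 ≤ w₁) (hw₂ : 0 ≤ w₂) (u v x y η : ℝ) :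
    |u * v| * min 1 |x * η| ^ a * min 1 |η * y| ^ b * w₁ * w₂
      ≤ min 1 |η| ^ (a + b) * w₁ * w₂ * ((|u| * (1 + |x| ^ a)) * (|v| * (1 + |y| ^ b))) := by
  have hη : 0 ≤ min 1 |η| := le_min zero_le_one (abs_nonneg η)
  have hx := min_one_abs_mul_rpow_le ha x η
  have hy := min_one_abs_mul_rpow_le hb y η
  rw [mul_comm y η] at hy
  calc |u * v| * min 1 |x * η| ^ a * min 1 |η * y| ^ b * w₁ * w₂
      ≤ |u * v| * ((1 + |x| ^ a) * min 1 |η| ^ a) * ((1 + |y| ^ b) * min 1 |η| ^ b) * w₁ * w₂ := by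
        gcongr
    _ = min 1 |η| ^ (a + b) * w₁ * w₂ * ((|u| * (1 + |x| ^ a)) * (|v| * (1 + |y| ^ b))) := by
        rw [rpow_add_of_nonneg hη ha hb, abs_mul]
        ring

lemma integrable_abs_rpow_mul_exp_neg_sq {s : ℝ} (hs : -1 < s) :
    Integrable fun x : ℝ => |x| ^ s * exp (-x ^ 2) := by
  have hpos : IntegrableOn (fun x : ℝ => |x| ^ s * exp (-x ^ 2)) (Ioi 0) := by
    have := integrableOn_rpow_mul_exp_neg_mul_sq (b := 1) one_pos hs
    simp only [neg_mul, one_mul] at this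
    exact this.congr_fun (fun x hx => by rw [abs_of_pos hx]) measurableSet_Ioi
  rw [← integrableOn_univ, ← Iio_union_Ici (a := (0 : ℝ)), integrableOn_union,
    integrableOn_Ici_iff_integrableOn_Ioi]
  refine ⟨?_, hpos⟩
  rw [← (Measure.measurePreserving_neg (volume : Measure ℝ)).integrableOn_comp_preimage
      (Homeomorph.neg ℝ).measurableEmbedding]
  simpa only [Function.comp_def, abs_neg, neg_sq, neg_preimage, neg_Iio, neg_zero] using hpos

lemma integrable_max_one_rpow_mul_abs_rpow_mul_exp_neg_sq {p c : ℝ} (hp : 0 ≤ p) (hc : -1 < c) :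
    Integrable fun u : ℝ => max 1 |u| ^ p * |u| ^ c * exp (-u ^ 2) := by
  refine ((integrable_abs_rpow_mul_exp_neg_sq hc).add
    (integrable_abs_rpow_mul_exp_neg_sq (s := p + c) (by linarith))).mono'
    (by fun_prop) (Filter.Eventually.of_forall fun u => ?_)
  rw [Real.norm_of_nonneg (by positivity), Pi.add_apply, ← add_mul]
  gcongr
  exact max_one_rpow_mul_rpow_le (abs_nonneg u) p c

lemma lintegral_min_one_rpow_mul_gaussian_le {p c σ : ℝ} (hp : 0 ≤ p) (hc : -1 < c)
    (hσ : 0 < σ) :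
    ∫⁻ η : ℝ, ENNReal.ofReal (min 1 |η| ^ p * |η| ^ c * exp (-(σ ^ 2 * η ^ 2)))
      ≤ ENNReal.ofReal ((∫ u : ℝ, max 1 |u| ^ p * |u| ^ c * exp (-u ^ 2))
          / (σ ^ (1 + c) * max 1 σ ^ p)) := by
  set G : ℝ → ℝ := fun u => max 1 |u| ^ p * |u| ^ c * exp (-u ^ 2)
  have hM : 0 < σ ^ c * max 1 σ ^ p := by positivity
  have hpoint (η : ℝ) : min 1 |η| ^ p * |η| ^ c * exp (-(σ ^ 2 * η ^ 2))
      ≤ (σ ^ c * max 1 σ ^ p)⁻¹ * G (σ * η) := by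
    rw [le_inv_mul_iff₀ hM]
    have hscale : (min 1 |η| * max 1 σ) ^ p ≤ max 1 (σ * |η|) ^ p :=
      rpow_le_rpow (by positivity) (min_one_mul_max_one_le_max_one_mul hσ.le) hp
    rw [mul_rpow (le_min zero_le_one (abs_nonneg η)) (by positivity)] at hscale
    calc σ ^ c * max 1 σ ^ p * (min 1 |η| ^ p * |η| ^ c * exp (-(σ ^ 2 * η ^ 2)))
        = min 1 |η| ^ p * max 1 σ ^ p * (σ ^ c * |η| ^ c) * exp (-(σ ^ 2 * η ^ 2)) := by ring
      _ ≤ max 1 (σ * |η|) ^ p * (σ ^ c * |η| ^ c) * exp (-(σ ^ 2 * η ^ 2)) := by gcongr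
      _ = G (σ * η) := by
        simp only [G, abs_mul, abs_of_pos hσ, mul_rpow hσ.le (abs_nonneg η), mul_pow]
  have hint : Integrable fun η => (σ ^ c * max 1 σ ^ p)⁻¹ * G (σ * η) :=
    ((integrable_max_one_rpow_mul_abs_rpow_mul_exp_neg_sq hp hc).comp_mul_left'
      hσ.ne').const_mul _
  calc ∫⁻ η : ℝ, ENNReal.ofReal (min 1 |η| ^ p * |η| ^ c * exp (-(σ ^ 2 * η ^ 2)))
      ≤ ∫⁻ η : ℝ, ENNReal.ofReal ((σ ^ c * max 1 σ ^ p)⁻¹ * G (σ * η)) :=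
        lintegral_mono fun η => ENNReal.ofReal_le_ofReal (hpoint η)
    _ = ENNReal.ofReal (∫ η, (σ ^ c * max 1 σ ^ p)⁻¹ * G (σ * η)) :=
        (ofReal_integral_eq_lintegral_ofReal hint
          (Filter.Eventually.of_forall fun η => by positivity)).symm
    _ = ENNReal.ofReal ((∫ u, G u) / (σ ^ (1 + c) * max 1 σ ^ p)) := by
        rw [integral_const_mul, Measure.integral_comp_mul_left, smul_eq_mul,
          abs_of_pos (inv_pos.mpr hσ), rpow_add hσ, rpow_one]
        congr 1
        field_simp

lemma lintegral_prod_prod_mul {α β γ : Type*} [MeasurableSpace α] [MeasurableSpace β]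
    [MeasurableSpace γ] {μ : Measure α} {ν : Measure β} {ρ : Measure γ} [SFinite ν]
    [SFinite ρ] {f : α → ENNReal} {g : β → ENNReal} {h : γ → ENNReal} (hf : AEMeasurable f μ)
    (hg : AEMeasurable g ν) (hh : AEMeasurable h ρ) :
    ∫⁻ z, f z.1 * (g z.2.1 * h z.2.2) ∂μ.prod (ν.prod ρ)
      = (∫⁻ x, f x ∂μ) * ((∫⁻ y, g y ∂ν) * ∫⁻ w, h w ∂ρ) := by
  rw [lintegral_prod_mul (g := fun z : β × γ => g z.1 * h z.2) hf (by fun_prop),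
    lintegral_prod_mul hg hh]

lemma lintegral_le_lintegral_kernel_mul_weighted_norms {a b : ℝ} (ha : 0 ≤ a) (hb : 0 ≤ b)
    (c σ : ℝ) {f : ℝ → ℝ} (hfa : Integrable fun x => |f x| * (1 + |x| ^ a))
    (hfb : Integrable fun x => |f x| * (1 + |x| ^ b)) :
    ∫⁻ p : ℝ × ℝ × ℝ,
        ENNReal.ofReal (|f p.2.1 * f p.2.2| * (min 1 |p.2.1 * p.1|) ^ a
          * (min 1 |p.1 * p.2.2|) ^ b * |p.1| ^ c * exp (-(σ ^ 2 * p.1 ^ 2)))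
      ≤ (∫⁻ η : ℝ, ENNReal.ofReal (min 1 |η| ^ (a + b) * |η| ^ c * exp (-(σ ^ 2 * η ^ 2))))
          * (ENNReal.ofReal (∫ x, |f x| * (1 + |x| ^ a))
            * ENNReal.ofReal (∫ x, |f x| * (1 + |x| ^ b))) := by
  have hkernel : AEMeasurable fun η : ℝ =>
      ENNReal.ofReal (min 1 |η| ^ (a + b) * |η| ^ c * exp (-(σ ^ 2 * η ^ 2))) := by
    fun_prop
  rw [ofReal_integral_eq_lintegral_ofReal hfa (.of_forall fun x => by positivity),
    ofReal_integral_eq_lintegral_ofReal hfb (.of_forall fun x => by positivity),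
    ← lintegral_prod_prod_mul hkernel hfa.aemeasurable.ennreal_ofReal
      hfb.aemeasurable.ennreal_ofReal]
  refine lintegral_mono fun p => ?_
  rw [← ENNReal.ofReal_mul (by positivity), ← ENNReal.ofReal_mul (by positivity)]
  exact ENNReal.ofReal_le_ofReal (abs_mul_mul_min_one_rpow_mul_min_one_rpow_le ha hb
    (by positivity) (exp_pos _).le _ _ _ _ _)

/-- For `a, b, c > 0` there is a constant `C` such that for every `σ > 0` and every
measurable `f` with `‖f‖_a, ‖f‖_b < ∞`,
`∫ |f(x)f(x̃)| (1∧|xη|)^a (1∧|ηx̃|)^b |η|^c e^{-σ²η²} dη dx dx̃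
  ≤ C σ^{-(1+c)} (1∨σ)^{-(a+b)} ‖f‖_a ‖f‖_b`. -/
theorem stmt5 (a b c : ℝ) (ha : 0 < a) (hb : 0 < b) (hc : 0 < c) :
    ∃ C : ℝ, 0 < C ∧ ∀ σ : ℝ, 0 < σ → ∀ f : ℝ → ℝ, Measurable f →
      Integrable (fun x => |f x| * (1 + |x| ^ a)) →
      Integrable (fun x => |f x| * (1 + |x| ^ b)) →
      (∫⁻ p : ℝ × ℝ × ℝ,
        ENNReal.ofReal (|f p.2.1 * f p.2.2| * (min 1 |p.2.1 * p.1|) ^ a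
          * (min 1 |p.1 * p.2.2|) ^ b * |p.1| ^ c * Real.exp (-(σ ^ 2 * p.1 ^ 2))))
      ≤ ENNReal.ofReal (C / (σ ^ (1 + c) * (max 1 σ) ^ (a + b))
          * (∫ x, |f x| * (1 + |x| ^ a)) * (∫ x, |f x| * (1 + |x| ^ b))) := by
  set K := ∫ u : ℝ, max 1 |u| ^ (a + b) * |u| ^ c * exp (-u ^ 2)
  have hK : 0 ≤ K := integral_nonneg fun u => by positivity
  refine ⟨K + 1, by linarith, fun σ hσ f _ hfa hfb => ?_⟩
  have hIa : 0 ≤ ∫ x, |f x| * (1 + |x| ^ a) := integral_nonneg fun x => by positivity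
  calc _ ≤ _ := lintegral_le_lintegral_kernel_mul_weighted_norms ha.le hb.le c σ hfa hfb
    _ ≤ ENNReal.ofReal (K / (σ ^ (1 + c) * max 1 σ ^ (a + b)))
          * (ENNReal.ofReal (∫ x, |f x| * (1 + |x| ^ a))
            * ENNReal.ofReal (∫ x, |f x| * (1 + |x| ^ b))) := by
        gcongr
        exact lintegral_min_one_rpow_mul_gaussian_le (by positivity) (by linarith) hσ
    _ ≤ _ := by
        rw [← ENNReal.ofReal_mul hIa, ← ENNReal.ofReal_mul (by positivity), ← mul_assoc]
        gcongr
        linarith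
end

section
/- Let $H \in (0, 1/2)$ and for $0 < s \le t$ define $K_H(t,s) := \mathcal{C}_H [ (t/s)^{H-1/2} (t-s)^{H-1/2} - (H-1/2) s^{1/2-H} \int_s^t u^{H-3/2} (u-s)^{H-1/2} \, du ]$ with $\mathcal{C}_H > 0$. Then for all $0 < s \le t$: $\mathcal{C}_H [ (t/s)^{H-1/2}(t-s)^{H-1/2} + \frac{1/2-H}{1/2+H} t^{-1} (t/s)^{H-1/2} (t-s)^{H+1/2} ] \le K_H(t,s) \le \mathcal{C}_H [ (t/s)^{H-1/2}(t-s)^{H-1/2} + \frac{1/2-H}{1/2+H} s^{-1} (t-s)^{H+1/2} ]$. -/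
/-!
On `[s, t]` the weight `u ^ (H - 3/2)` is decreasing, so it lies between `t ^ (H - 3/2)` and
`s ^ (H - 3/2)`. Integrating against `(u - s) ^ (H - 1/2)`, whose integral is
`(t - s) ^ (H + 1/2) / (H + 1/2)`, sandwiches the integral in `K_H`; since `H < 1/2` the
integral enters `K_H` with the nonnegative coefficient `(1/2 - H) s ^ (1/2 - H)`.
-/

open MeasureTheory intervalIntegral Real

theorem integral_sub_rpow (a b : ℝ) {r : ℝ} (hr : -1 < r) :
    ∫ u in a..b, (u - a) ^ r = (b - a) ^ (r + 1) / (r + 1) := by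
  rw [intervalIntegral.integral_comp_sub_right (fun x : ℝ => x ^ r) a, sub_self,
    integral_rpow (Or.inl hr), zero_rpow (by linarith), sub_zero]

theorem intervalIntegrable_sub_rpow (a b : ℝ) {r : ℝ} (hr : -1 < r) :
    IntervalIntegrable (fun u : ℝ => (u - a) ^ r) volume a b := by
  simpa using (intervalIntegrable_rpow' (a := a - a) (b := b - a) hr).comp_sub_right a

section WeightedPowerIntegral

variable {a b p r : ℝ}

theorem rpow_mul_sub_rpow_le_of_le {u : ℝ} (ha : 0 < a) (hau : a ≤ u) (hp : p ≤ 0) :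
    u ^ p * (u - a) ^ r ≤ a ^ p * (u - a) ^ r :=
  mul_le_mul_of_nonneg_right (rpow_le_rpow_of_nonpos ha hau hp)
    (rpow_nonneg (sub_nonneg.2 hau) _)

theorem intervalIntegrable_rpow_mul_sub_rpow (ha : 0 < a) (hab : a ≤ b) (hp : p ≤ 0)
    (hr : -1 < r) :
    IntervalIntegrable (fun u : ℝ => u ^ p * (u - a) ^ r) volume a b := by
  rw [intervalIntegrable_iff_integrableOn_Ioc_of_le hab]
  have hdom : IntegrableOn (fun u : ℝ => a ^ p * (u - a) ^ r) (Set.Ioc a b) := by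
    rw [← intervalIntegrable_iff_integrableOn_Ioc_of_le hab]
    exact (intervalIntegrable_sub_rpow a b hr).const_mul _
  have hcont : ContinuousOn (fun u : ℝ => u ^ p * (u - a) ^ r) (Set.Ioc a b) :=
    (continuousOn_id.rpow_const fun u hu => Or.inl (ha.trans hu.1).ne').mul
      ((continuousOn_id.sub continuousOn_const).rpow_const fun u hu =>
        Or.inl (sub_ne_zero.2 hu.1.ne'))
  refine hdom.mono' (hcont.aestronglyMeasurable measurableSet_Ioc) ?_
  filter_upwards [ae_restrict_mem measurableSet_Ioc] with u hu
  rw [norm_of_nonneg (mul_nonneg (rpow_nonneg (ha.trans hu.1).le _)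
    (rpow_nonneg (sub_nonneg.2 hu.1.le) _))]
  exact rpow_mul_sub_rpow_le_of_le ha hu.1.le hp

theorem integral_rpow_mul_sub_rpow_le (ha : 0 < a) (hab : a ≤ b) (hp : p ≤ 0) (hr : -1 < r) :
    ∫ u in a..b, u ^ p * (u - a) ^ r ≤ a ^ p * ((b - a) ^ (r + 1) / (r + 1)) := by
  rw [← integral_sub_rpow a b hr, ← intervalIntegral.integral_const_mul]
  exact integral_mono_on hab (intervalIntegrable_rpow_mul_sub_rpow ha hab hp hr)
    ((intervalIntegrable_sub_rpow a b hr).const_mul _)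
    fun u hu => rpow_mul_sub_rpow_le_of_le ha hu.1 hp

theorem le_integral_rpow_mul_sub_rpow (ha : 0 < a) (hab : a ≤ b) (hp : p ≤ 0) (hr : -1 < r) :
    b ^ p * ((b - a) ^ (r + 1) / (r + 1)) ≤ ∫ u in a..b, u ^ p * (u - a) ^ r := by
  rw [← integral_sub_rpow a b hr, ← intervalIntegral.integral_const_mul]
  refine integral_mono_on hab ((intervalIntegrable_sub_rpow a b hr).const_mul _)
    (intervalIntegrable_rpow_mul_sub_rpow ha hab hp hr) fun u hu => ?_
  exact mul_le_mul_of_nonneg_right (rpow_le_rpow_of_nonpos (ha.trans_le hu.1) hu.2 hp)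
    (rpow_nonneg (sub_nonneg.2 hu.1) _)

end WeightedPowerIntegral

theorem inv_mul_div_rpow {s t : ℝ} (hs : 0 < s) (ht : 0 < t) (q : ℝ) :
    t⁻¹ * (t / s) ^ q = s ^ (-q) * t ^ (q - 1) := by
  rw [div_rpow ht.le hs.le, rpow_sub_one ht.ne', rpow_neg hs.le]
  field_simp

theorem rpow_neg_mul_rpow_sub_one {s : ℝ} (hs : 0 < s) (q : ℝ) :
    s ^ (-q) * s ^ (q - 1) = s⁻¹ := by
  rw [← rpow_add hs, show -q + (q - 1) = -1 by ring, rpow_neg_one]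

/-- Bounds for the fBm Volterra kernel when `H < 1/2`. -/
theorem stmt8 (H CH : ℝ) (hH0 : 0 < H) (hH : H < 1 / 2) (hCH : 0 < CH)
    (K : ℝ → ℝ → ℝ)
    (hK : ∀ s t : ℝ, 0 < s → s ≤ t →
      K t s = CH * ((t / s) ^ (H - 1 / 2) * (t - s) ^ (H - 1 / 2)
        - (H - 1 / 2) * s ^ ((1 : ℝ) / 2 - H)
          * ∫ u in s..t, u ^ (H - 3 / 2) * (u - s) ^ (H - 1 / 2))) :
    ∀ s t : ℝ, 0 < s → s ≤ t →
      CH * ((t / s) ^ (H - 1 / 2) * (t - s) ^ (H - 1 / 2)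
          + (1 / 2 - H) / (1 / 2 + H) * t⁻¹ * (t / s) ^ (H - 1 / 2)
            * (t - s) ^ (H + 1 / 2))
        ≤ K t s ∧
      K t s ≤ CH * ((t / s) ^ (H - 1 / 2) * (t - s) ^ (H - 1 / 2)
          + (1 / 2 - H) / (1 / 2 + H) * s⁻¹ * (t - s) ^ (H + 1 / 2)) := by
  intro s t hs hst
  have hp : H - 3 / 2 ≤ 0 := by linarith
  have hr : -1 < H - 1 / 2 := by linarith
  have hexp : H - 1 / 2 + 1 = H + 1 / 2 := by ring
  have hlo := le_integral_rpow_mul_sub_rpow hs hst hp hr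
  have hup := integral_rpow_mul_sub_rpow_le hs hst hp hr
  rw [hexp] at hlo hup
  have hneg : (1 : ℝ) / 2 - H = -(H - 1 / 2) := by ring
  have hsub : H - 3 / 2 = H - 1 / 2 - 1 := by ring
  rw [hK s t hs hst, sub_eq_add_neg (_ * _), ← neg_mul, ← neg_mul, neg_sub]
  constructor
  · have hterm : (1 / 2 - H) / (1 / 2 + H) * t⁻¹ * (t / s) ^ (H - 1 / 2) * (t - s) ^ (H + 1 / 2)
        = (1 / 2 - H) * s ^ ((1 : ℝ) / 2 - H)
          * (t ^ (H - 3 / 2) * ((t - s) ^ (H + 1 / 2) / (H + 1 / 2))) := by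
      rw [mul_assoc _ t⁻¹, inv_mul_div_rpow hs (hs.trans_le hst), hneg, hsub]
      ring
    rw [hterm]
    gcongr
  · have hterm : (1 / 2 - H) / (1 / 2 + H) * s⁻¹ * (t - s) ^ (H + 1 / 2)
        = (1 / 2 - H) * s ^ ((1 : ℝ) / 2 - H)
          * (s ^ (H - 3 / 2) * ((t - s) ^ (H + 1 / 2) / (H + 1 / 2))) := by
      rw [← rpow_neg_mul_rpow_sub_one hs (H - 1 / 2), hneg, hsub]
      ring
    rw [hterm]
    gcongr
end

section
/- Let $H \in (0,1/2)$, $\mathcal{C}_H > 0$, and let $K_H(t,s)$ be the fBm Volterra kernel for $H < 1/2$ (given by $K_H(t,s) = \mathcal{C}_H[(t/s)^{H-1/2}(t-s)^{H-1/2} - (H-1/2)s^{1/2-H}\int_s^t u^{H-3/2}(u-s)^{H-1/2}du]$). Define $\mu_{r, r+s/n} := \int_r^{r+s/n} K_H(r+s/n, \theta)^2 \, d\theta$. Then for all $r > 0$, $s \ge 0$, $n \ge 1$: $\frac{\mathcal{C}_H^2 s^{2H}}{2H} \le n^{2H} \mu_{r, r+s/n} \le \frac{\mathcal{C}_H^2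 s^{2H}}{2H}\left(1 + \frac{1/2-H}{1/2+H} \cdot \frac{s}{rn}\right)^2$. -/
open MeasureTheory Set Function

/-!
Write `α = H - 1/2 ∈ (-1/2, 0)`. In the inner integral `∫_θ^t u^(α-1) (u-θ)^α du`, bounding
`(u-θ)^α` from below by `(t-θ)^α` and computing `∫_θ^t u^(α-1) du` exactly gives
`K_H(t,θ) ≥ C_H (t-θ)^α`; bounding `u^(α-1)` from above by `θ^(α-1)` and `(t/θ)^α` by `1` gives
`K_H(t,θ) ≤ C_H (t-θ)^α (1 + (1/2-H)/(1/2+H) · (t-θ)/θ)`. Squaring and integrating over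
`θ ∈ [r, t]` with `∫_r^t (t-θ)^(2H-1) dθ = (t-r)^(2H)/(2H)` and `t - r = s/n` gives both bounds.
-/

lemma integral_sub_rpow_left {p : ℝ} (hp : -1 < p) (a b : ℝ) :
    ∫ x in a..b, (b - x) ^ p = (b - a) ^ (p + 1) / (p + 1) := by
  rw [intervalIntegral.integral_comp_sub_left (· ^ p) b, integral_rpow (Or.inl hp), sub_self,
    Real.zero_rpow (by linarith), sub_zero]

lemma integral_sub_rpow_right {p : ℝ} (hp : -1 < p) (a b : ℝ) :
    ∫ x in a..b, (x - a) ^ p = (b - a) ^ (p + 1) / (p + 1) := by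
  rw [intervalIntegral.integral_comp_sub_right (· ^ p) a, integral_rpow (Or.inl hp), sub_self,
    Real.zero_rpow (by linarith), sub_zero]

lemma intervalIntegrable_sub_rpow_left {p : ℝ} (hp : -1 < p) (a b : ℝ) :
    IntervalIntegrable (fun x => (b - x) ^ p) volume a b := by
  simpa using
    ((intervalIntegral.intervalIntegrable_rpow' (a := 0) (b := b - a) hp).comp_sub_left b).symm

lemma intervalIntegrable_sub_rpow_right {p : ℝ} (hp : -1 < p) (a b : ℝ) :
    IntervalIntegrable (fun x => (x - a) ^ p) volume a b := by
  simpa using (intervalIntegral.intervalIntegrable_rpow' (a := 0) (b := b - a) hp).comp_sub_right a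

lemma measurable_intervalIntegral_of_measurable_uncurry {F : ℝ → ℝ → ℝ}
    (hF : Measurable (uncurry F)) {a b : ℝ → ℝ} (ha : Measurable a) (hb : Measurable b) :
    Measurable fun x => ∫ u in a x..b x, F x u := by
  have hIoc : ∀ {a b : ℝ → ℝ}, Measurable a → Measurable b →
      Measurable fun x => ∫ u in Ioc (a x) (b x), F x u := by
    intro a b ha hb
    have hset : MeasurableSet {p : ℝ × ℝ | a p.1 < p.2 ∧ p.2 ≤ b p.1} :=
      (measurableSet_lt (ha.comp measurable_fst) measurable_snd).inter
        (measurableSet_le measurable_snd (hb.comp measurable_fst))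
    have hind : Measurable (uncurry fun x u => (Ioc (a x) (b x)).indicator (F x) u) :=
      hF.indicator hset
    simp_rw [← integral_indicator measurableSet_Ioc]
    exact hind.stronglyMeasurable.integral_prod_right'.measurable
  exact (hIoc ha hb).sub (hIoc hb ha)

lemma intervalIntegrable_rpow_mul_sub_rpow_s10 {p q s t : ℝ} (hq : -1 < q) (hs : 0 < s)
    (hst : s ≤ t) : IntervalIntegrable (fun u => u ^ p * (u - s) ^ q) volume s t :=
  (intervalIntegrable_sub_rpow_right hq s t).continuousOn_mul <|
    ContinuousOn.rpow_const continuousOn_id fun u hu => Or.inl <| by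
      rw [uIcc_of_le hst] at hu; exact (hs.trans_le hu.1).ne'

lemma integral_rpow_mul_sub_rpow_le_s10 {p q s t : ℝ} (hp : p ≤ 0) (hq : -1 < q) (hs : 0 < s)
    (hst : s ≤ t) :
    ∫ u in s..t, u ^ p * (u - s) ^ q ≤ s ^ p * ((t - s) ^ (q + 1) / (q + 1)) := by
  rw [← integral_sub_rpow_right hq, ← intervalIntegral.integral_const_mul]
  refine intervalIntegral.integral_mono_on_of_le_Ioo hst
    (intervalIntegrable_rpow_mul_sub_rpow_s10 hq hs hst)
    ((intervalIntegrable_sub_rpow_right hq s t).const_mul _) fun u hu => ?_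
  exact mul_le_mul_of_nonneg_right (Real.rpow_le_rpow_of_nonpos hs hu.1.le hp)
    (Real.rpow_nonneg (sub_nonneg.2 hu.1.le) _)

lemma le_integral_rpow_mul_sub_rpow_s10 {p q s t : ℝ} (hq : -1 < q) (hq' : q ≤ 0) (hs : 0 < s)
    (hst : s ≤ t) :
    (t - s) ^ q * ∫ u in s..t, u ^ p ≤ ∫ u in s..t, u ^ p * (u - s) ^ q := by
  have hpow : IntervalIntegrable (fun u => u ^ p) volume s t :=
    intervalIntegral.intervalIntegrable_rpow (Or.inr (notMem_uIcc_of_lt hs (hs.trans_le hst)))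
  rw [← intervalIntegral.integral_const_mul]
  refine intervalIntegral.integral_mono_on_of_le_Ioo hst (hpow.const_mul _)
    (intervalIntegrable_rpow_mul_sub_rpow_s10 hq hs hst) fun u hu => ?_
  rw [mul_comm]
  exact mul_le_mul_of_nonneg_left
    (Real.rpow_le_rpow_of_nonpos (sub_pos.2 hu.1) (by linarith [hu.2]) hq')
    (Real.rpow_nonneg (hs.trans hu.1).le _)

noncomputable def fbmKernel (H CH t s : ℝ) : ℝ :=
  CH * ((t / s) ^ (H - 1 / 2) * (t - s) ^ (H - 1 / 2)
    - (H - 1 / 2) * s ^ ((1 : ℝ) / 2 - H)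
      * ∫ u in s..t, u ^ (H - 3 / 2) * (u - s) ^ (H - 1 / 2))

lemma measurable_fbmKernel (H CH t : ℝ) : Measurable (fbmKernel H CH t) := by
  have : Measurable fun s => ∫ u in s..t, u ^ (H - 3 / 2) * (u - s) ^ (H - 1 / 2) :=
    measurable_intervalIntegral_of_measurable_uncurry
      (F := fun s u => u ^ (H - 3 / 2) * (u - s) ^ (H - 1 / 2)) (by fun_prop)
      measurable_id measurable_const
  unfold fbmKernel
  fun_prop

lemma fbmKernel_eq_rpow_neg (H CH t s : ℝ) :
    fbmKernel H CH t s = CH * ((t / s) ^ (H - 1 / 2) * (t - s) ^ (H - 1 / 2)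
      + -(H - 1 / 2) * s ^ (-(H - 1 / 2))
        * ∫ u in s..t, u ^ (H - 1 / 2 - 1) * (u - s) ^ (H - 1 / 2)) := by
  rw [fbmKernel, show (1 : ℝ) / 2 - H = -(H - 1 / 2) by ring,
    show H - 3 / 2 = H - 1 / 2 - 1 by ring]
  ring

lemma rpow_neg_mul_rpow {s x : ℝ} (hs : 0 ≤ s) (hx : 0 ≤ x) (a : ℝ) :
    s ^ (-a) * x ^ a = (x / s) ^ a := by
  rw [Real.rpow_neg hs, Real.div_rpow hx hs, inv_mul_eq_div]

section fbmKernel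

variable {H CH s t : ℝ}

lemma mul_rpow_le_fbmKernel (hCH : 0 ≤ CH) (hH : -(1 / 2) < H) (hH' : H < 1 / 2) (hs : 0 < s)
    (hst : s ≤ t) : CH * (t - s) ^ (H - 1 / 2) ≤ fbmKernel H CH t s := by
  rw [fbmKernel_eq_rpow_neg]
  set α := H - 1 / 2 with hα
  have hα0 : α < 0 := by linarith
  have hI := le_integral_rpow_mul_sub_rpow_s10 (p := α - 1) (by linarith : -1 < α)
    (by linarith) hs hst
  have hpow : ∫ u in s..t, u ^ (α - 1) = (t ^ α - s ^ α) / α := by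
    rw [integral_rpow (Or.inr ⟨by linarith, notMem_uIcc_of_lt hs (hs.trans_le hst)⟩),
      sub_add_cancel]
  rw [hpow] at hI
  have key := mul_le_mul_of_nonneg_left hI
    (mul_nonneg (by linarith : 0 ≤ -α) (Real.rpow_nonneg hs.le (-α)))
  have ht := rpow_neg_mul_rpow hs.le (hs.le.trans hst) α
  have hs' := rpow_neg_mul_rpow hs.le hs.le α
  rw [div_self hs.ne', Real.one_rpow] at hs'
  have hlhs : -α * s ^ (-α) * ((t - s) ^ α * ((t ^ α - s ^ α) / α))
      = (t - s) ^ α * (s ^ (-α) * s ^ α - s ^ (-α) * t ^ α) := by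
    field_simp [hα0.ne]
    ring
  rw [ht, hs'] at hlhs
  refine mul_le_mul_of_nonneg_left ?_ hCH
  linarith

lemma fbmKernel_le_mul_rpow (hCH : 0 ≤ CH) (hH : -(1 / 2) < H) (hH' : H < 1 / 2) (hs : 0 < s)
    (hst : s ≤ t) :
    fbmKernel H CH t s
      ≤ CH * (t - s) ^ (H - 1 / 2) * (1 + (1 / 2 - H) / (1 / 2 + H) * ((t - s) / s)) := by
  rw [fbmKernel_eq_rpow_neg, mul_assoc CH]
  set α := H - 1 / 2 with hα
  have hI := integral_rpow_mul_sub_rpow_le_s10 (p := α - 1) (by linarith) (by linarith : -1 < α)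
    hs hst
  have key := mul_le_mul_of_nonneg_left hI
    (mul_nonneg (by linarith : 0 ≤ -α) (Real.rpow_nonneg hs.le (-α)))
  have hquot : (t / s) ^ α * (t - s) ^ α ≤ (t - s) ^ α :=
    mul_le_of_le_one_left (Real.rpow_nonneg (sub_nonneg.2 hst) _)
      (Real.rpow_le_one_of_one_le_of_nonpos ((one_le_div hs).2 hst) (by linarith))
  have hpow : s ^ (-α) * s ^ (α - 1) = s⁻¹ := by
    rw [← Real.rpow_add hs, show -α + (α - 1) = -1 by ring, Real.rpow_neg_one]
  have hrhs : -α * s ^ (-α) * (s ^ (α - 1) * ((t - s) ^ (α + 1) / (α + 1)))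
      = (t - s) ^ α * ((1 / 2 - H) / (1 / 2 + H) * ((t - s) / s)) := by
    rw [Real.rpow_add_one' (sub_nonneg.2 hst) (by linarith), ← mul_assoc, mul_assoc (-α),
      hpow, hα]
    field_simp
    ring
  refine mul_le_mul_of_nonneg_left ?_ hCH
  linarith

end fbmKernel

lemma integral_sq_bounds_of_le_of_le {f g : ℝ → ℝ} {a b M : ℝ} (hab : a ≤ b)
    (hg : IntervalIntegrable (fun x => g x ^ 2) volume a b)
    (hf : AEStronglyMeasurable f (volume.restrict (Ioc a b)))
    (hfg : ∀ x ∈ Ioc a b, 0 ≤ g x ∧ g x ≤ f x ∧ f x ≤ M * g x) :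
    ∫ x in a..b, g x ^ 2 ≤ ∫ x in a..b, f x ^ 2 ∧
      ∫ x in a..b, f x ^ 2 ≤ M ^ 2 * ∫ x in a..b, g x ^ 2 := by
  have hsq : ∀ x ∈ Ioc a b, g x ^ 2 ≤ f x ^ 2 ∧ f x ^ 2 ≤ M ^ 2 * g x ^ 2 := by
    intro x hx
    obtain ⟨hg0, hgf, hfM⟩ := hfg x hx
    exact ⟨pow_le_pow_left₀ hg0 hgf 2,
      mul_pow M (g x) 2 ▸ pow_le_pow_left₀ (hg0.trans hgf) hfM 2⟩
  have hMg : IntervalIntegrable (fun x => M ^ 2 * g x ^ 2) volume a b := hg.const_mul _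
  have hf2 : IntervalIntegrable (fun x => f x ^ 2) volume a b := by
    rw [← uIoc_of_le hab] at hf
    refine hMg.mono_fun' (hf.pow 2) ?_
    rw [uIoc_of_le hab]
    refine (ae_restrict_iff' measurableSet_Ioc).2 (Filter.Eventually.of_forall fun x hx => ?_)
    exact (Real.norm_of_nonneg (sq_nonneg _)).trans_le (hsq x hx).2
  rw [← intervalIntegral.integral_const_mul]
  simp only [intervalIntegral.integral_of_le hab]
  exact ⟨setIntegral_mono_on hg.1 hf2.1 measurableSet_Ioc fun x hx => (hsq x hx).1,
    setIntegral_mono_on hf2.1 hMg.1 measurableSet_Ioc fun x hx => (hsq x hx).2⟩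

lemma integral_sq_fbmKernel_bounds {H CH r t : ℝ} (hCH : 0 ≤ CH) (hH : 0 < H) (hH' : H < 1 / 2)
    (hr : 0 < r) (hrt : r ≤ t) :
    CH ^ 2 * (t - r) ^ (2 * H) / (2 * H) ≤ ∫ θ in r..t, fbmKernel H CH t θ ^ 2 ∧
      ∫ θ in r..t, fbmKernel H CH t θ ^ 2
        ≤ CH ^ 2 * (t - r) ^ (2 * H) / (2 * H)
          * (1 + (1 / 2 - H) / (1 / 2 + H) * ((t - r) / r)) ^ 2 := by
  set M := 1 + (1 / 2 - H) / (1 / 2 + H) * ((t - r) / r)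
  have hsq : EqOn (fun θ => (CH * (t - θ) ^ (H - 1 / 2)) ^ 2)
      (fun θ => CH ^ 2 * (t - θ) ^ (2 * H - 1)) (Icc r t) := fun θ hθ => by
    dsimp only
    rw [mul_pow, ← Real.rpow_mul_natCast (sub_nonneg.2 hθ.2)]
    ring_nf
  have hint : ∫ θ in r..t, (CH * (t - θ) ^ (H - 1 / 2)) ^ 2
      = CH ^ 2 * (t - r) ^ (2 * H) / (2 * H) := by
    rw [intervalIntegral.integral_congr (uIcc_of_le hrt ▸ hsq),
      intervalIntegral.integral_const_mul, integral_sub_rpow_left (by linarith), sub_add_cancel,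
      mul_div_assoc]
  have hintegrable :
      IntervalIntegrable (fun θ => (CH * (t - θ) ^ (H - 1 / 2)) ^ 2) volume r t := by
    refine (intervalIntegrable_congr ?_).2
      ((intervalIntegrable_sub_rpow_left (by linarith : -1 < 2 * H - 1) r t).const_mul (CH ^ 2))
    rw [uIoc_of_le hrt]
    exact hsq.mono Ioc_subset_Icc_self
  have hbound : ∀ θ ∈ Ioc r t, 0 ≤ CH * (t - θ) ^ (H - 1 / 2) ∧
      CH * (t - θ) ^ (H - 1 / 2) ≤ fbmKernel H CH t θ ∧
      fbmKernel H CH t θ ≤ M * (CH * (t - θ) ^ (H - 1 / 2)) := by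
    rintro θ ⟨hrθ, hθt⟩
    have hθ : 0 < θ := hr.trans hrθ
    have hg0 : 0 ≤ CH * (t - θ) ^ (H - 1 / 2) :=
      mul_nonneg hCH (Real.rpow_nonneg (sub_nonneg.2 hθt) _)
    refine ⟨hg0, mul_rpow_le_fbmKernel hCH (by linarith) hH' hθ hθt,
      (fbmKernel_le_mul_rpow hCH (by linarith) hH' hθ hθt).trans ?_⟩
    rw [mul_comm M]
    refine mul_le_mul_of_nonneg_left (add_le_add_right (mul_le_mul_of_nonneg_left ?_ ?_) 1) hg0
    · exact div_le_div₀ (by linarith) (by linarith) hr hrθ.le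
    · exact div_nonneg (by linarith) (by linarith)
  obtain ⟨hlow, hup⟩ := integral_sq_bounds_of_le_of_le hrt hintegrable
    (measurable_fbmKernel H CH t).aestronglyMeasurable hbound
  rw [hint] at hlow hup
  exact ⟨hlow, hup.trans_eq (mul_comm _ _)⟩

/-- Bounds on `n^{2H} μ_{r, r+s/n}` for the fBm Volterra kernel, `H < 1/2`. -/
theorem stmt10 (H CH : ℝ) (hH0 : 0 < H) (hH : H < 1 / 2) (hCH : 0 < CH)
    (K : ℝ → ℝ → ℝ)
    (hK : ∀ s t : ℝ, 0 < s → s ≤ t →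
      K t s = CH * ((t / s) ^ (H - 1 / 2) * (t - s) ^ (H - 1 / 2)
        - (H - 1 / 2) * s ^ ((1 : ℝ) / 2 - H)
          * ∫ u in s..t, u ^ (H - 3 / 2) * (u - s) ^ (H - 1 / 2))) :
    ∀ (r s : ℝ) (n : ℕ), 0 < r → 0 ≤ s → 1 ≤ n →
      CH ^ 2 * s ^ (2 * H) / (2 * H)
          ≤ (n : ℝ) ^ (2 * H)
            * ∫ θ in r..(r + s / (n : ℝ)), (K (r + s / (n : ℝ)) θ) ^ 2 ∧
      (n : ℝ) ^ (2 * H) * ∫ θ in r..(r + s / (n : ℝ)), (K (r + s / (n : ℝ)) θ) ^ 2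
          ≤ CH ^ 2 * s ^ (2 * H) / (2 * H)
            * (1 + (1 / 2 - H) / (1 / 2 + H) * (s / (r * (n : ℝ)))) ^ 2 := by
  intro r s n hr hs hn
  have hn0 : (0 : ℝ) < n := Nat.cast_pos.2 hn
  have hrt : r ≤ r + s / n := le_add_of_nonneg_right (div_nonneg hs hn0.le)
  have hKeq : ∫ θ in r..(r + s / n), K (r + s / n) θ ^ 2
      = ∫ θ in r..(r + s / n), fbmKernel H CH (r + s / n) θ ^ 2 :=
    intervalIntegral.integral_congr fun θ hθ => by
      rw [uIcc_of_le hrt] at hθ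
      rw [hK θ _ (hr.trans_le hθ.1) hθ.2, fbmKernel]
  have hscale : (n : ℝ) ^ (2 * H) * (r + s / n - r) ^ (2 * H) = s ^ (2 * H) := by
    rw [add_sub_cancel_left, Real.div_rpow hs hn0.le,
      mul_div_cancel₀ _ (Real.rpow_pos_of_pos hn0 _).ne']
  have hratio : (r + s / n - r) / r = s / (r * n) := by
    rw [add_sub_cancel_left, div_div, mul_comm]
  obtain ⟨hlow, hup⟩ := integral_sq_fbmKernel_bounds hCH.le hH0 hH hr hrt
  rw [← hKeq] at hlow hup
  rw [hratio] at hup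
  have hn2H : 0 ≤ (n : ℝ) ^ (2 * H) := Real.rpow_nonneg hn0.le _
  constructor
  · calc CH ^ 2 * s ^ (2 * H) / (2 * H)
        = (n : ℝ) ^ (2 * H) * (CH ^ 2 * (r + s / n - r) ^ (2 * H) / (2 * H)) := by
          rw [← hscale]; ring
      _ ≤ _ := mul_le_mul_of_nonneg_left hlow hn2H
  · refine (mul_le_mul_of_nonneg_left hup hn2H).trans_eq ?_
    rw [← hscale]
    ring
end

section
/- Let $H \in (1/2,1)$, $\mathcal{C}_H > 0$, and let $K_H(t,s) := \mathcal{C}_H s^{1/2-H}\int_s^t (u-s)^{H-3/2} u^{H-1/2} du$ for $0 < s \le t$. Set $\beta_{H,1} := \mathcal{C}_H (H - 1/2)^{-1}$. Then there exists a constant $C > 0$ depending only on $H$ such that for all $r, s > 0$ and all integers $n \ge 1$: $| n^{H - 1/2} s^{1/2 - H} K_H(r + s/n, r) - \beta_{H,1} | \le C \frac{s}{rn}$. -/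
/-!
Write `p = H - 1/2 ∈ (0, 1/2)` and `δ = s/n`. On `[r, r + δ]` the factor `u ^ p` lies between `r ^ p`
and its tangent line `r ^ p + p r ^ (p - 1) (u - r)` (concavity of `u ↦ u ^ p`). Integrating
against `(u - r) ^ (p - 1)`, the constant term gives exactly `δ ^ p r ^ p / p`, which the prefactor
`δ ^ (-p) r ^ (-p)` turns into `1/p`, and the tangent term contributes at most `p/(p+1) · δ/r`.
-/

open intervalIntegral Real Set

lemma Real.rpow_add_le_rpow_add_mul {p r x : ℝ} (hp0 : 0 ≤ p) (hp1 : p ≤ 1) (hr : 0 < r)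
    (hx : 0 ≤ x) : (r + x) ^ p ≤ r ^ p + p * r ^ (p - 1) * x := by
  have hbern := rpow_one_add_le_one_add_mul_self (s := x / r)
    (by linarith [div_nonneg hx hr.le]) hp0 hp1
  calc (r + x) ^ p = r ^ p * (1 + x / r) ^ p := by
        rw [← mul_rpow hr.le (by positivity)]; congr 1; field_simp
    _ ≤ r ^ p * (1 + p * (x / r)) := by gcongr
    _ = r ^ p + p * r ^ (p - 1) * x := by rw [rpow_sub_one hr.ne']; field_simp

section LocalScaling

variable {p r δ : ℝ}

lemma integral_rpow_sub_one (hp : 0 < p) (b : ℝ) :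
    ∫ x in (0 : ℝ)..b, x ^ (p - 1) = b ^ p / p := by
  rw [integral_rpow (Or.inl (by linarith)), sub_add_cancel, zero_rpow hp.ne', sub_zero]

lemma intervalIntegrable_rpow_sub_one_mul_add_rpow (hp : 0 < p) (hr : 0 < r) (hδ : 0 ≤ δ) :
    IntervalIntegrable (fun x => x ^ (p - 1) * (r + x) ^ p) MeasureTheory.volume 0 δ := by
  refine (intervalIntegrable_rpow' (by linarith)).mul_continuousOn ?_
  refine ContinuousOn.rpow_const (by fun_prop) fun x hx => Or.inl ?_
  rw [uIcc_of_le hδ] at hx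
  linarith [hx.1]

lemma integral_rpow_sub_one_mul_add_rpow_ge (hp : 0 < p) (hr : 0 < r) (hδ : 0 ≤ δ) :
    r ^ p * (δ ^ p / p) ≤ ∫ x in (0 : ℝ)..δ, x ^ (p - 1) * (r + x) ^ p := by
  rw [← integral_rpow_sub_one hp, ← integral_const_mul]
  refine integral_mono_on_of_le_Ioo hδ ((intervalIntegrable_rpow' (by linarith)).const_mul _)
    (intervalIntegrable_rpow_sub_one_mul_add_rpow hp hr hδ) fun x hx => ?_
  rw [mul_comm]
  gcongr
  · exact rpow_nonneg hx.1.le _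
  · linarith [hx.1]

lemma integral_rpow_sub_one_mul_add_rpow_le (hp0 : 0 < p) (hp1 : p ≤ 1) (hr : 0 < r)
    (hδ : 0 ≤ δ) :
    ∫ x in (0 : ℝ)..δ, x ^ (p - 1) * (r + x) ^ p
      ≤ r ^ p * (δ ^ p / p) + p * r ^ (p - 1) * (δ ^ (p + 1) / (p + 1)) := by
  rw [← integral_rpow_sub_one (by linarith : 0 < p + 1), add_sub_cancel_right,
    ← integral_rpow_sub_one hp0, ← integral_const_mul, ← integral_const_mul, ← integral_add]
  · refine integral_mono_on_of_le_Ioo hδ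
      (intervalIntegrable_rpow_sub_one_mul_add_rpow hp0 hr hδ) ?_ fun x hx => ?_
    · exact ((intervalIntegrable_rpow' (by linarith)).const_mul _).add
        ((intervalIntegrable_rpow' (by linarith)).const_mul _)
    · calc x ^ (p - 1) * (r + x) ^ p ≤ x ^ (p - 1) * (r ^ p + p * r ^ (p - 1) * x) := by
            gcongr
            · exact rpow_nonneg hx.1.le _
            · exact rpow_add_le_rpow_add_mul hp0.le hp1 hr hx.1.le
        _ = r ^ p * x ^ (p - 1) + p * r ^ (p - 1) * x ^ p := by
            rw [rpow_sub_one hx.1.ne']; field_simp [hx.1.ne']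
  · exact (intervalIntegrable_rpow' (by linarith)).const_mul _
  · exact (intervalIntegrable_rpow' (by linarith)).const_mul _

lemma abs_rpow_neg_mul_integral_sub_inv_le (hp0 : 0 < p) (hp1 : p ≤ 1) (hr : 0 < r)
    (hδ : 0 < δ) :
    |δ ^ (-p) * r ^ (-p) * (∫ u in r..r + δ, (u - r) ^ (p - 1) * u ^ p) - p⁻¹|
      ≤ p / (p + 1) * (δ / r) := by
  have hshift : ∫ u in r..r + δ, (u - r) ^ (p - 1) * u ^ p
      = ∫ x in (0 : ℝ)..δ, x ^ (p - 1) * (r + x) ^ p := by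
    simpa using (integral_comp_add_left (fun u => (u - r) ^ (p - 1) * u ^ p) r
      (a := 0) (b := δ)).symm
  have hlower := integral_rpow_sub_one_mul_add_rpow_ge hp0 hr hδ.le
  have hupper := integral_rpow_sub_one_mul_add_rpow_le hp0 hp1 hr hδ.le
  rw [hshift]
  set I := ∫ x in (0 : ℝ)..δ, x ^ (p - 1) * (r + x) ^ p
  have hc : 0 < δ ^ (-p) * r ^ (-p) := by positivity
  have hmain : δ ^ (-p) * r ^ (-p) * (r ^ p * (δ ^ p / p)) = p⁻¹ := by
    rw [rpow_neg hδ.le, rpow_neg hr.le]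
    field_simp
  have herr : δ ^ (-p) * r ^ (-p) * (p * r ^ (p - 1) * (δ ^ (p + 1) / (p + 1)))
      = p / (p + 1) * (δ / r) := by
    rw [rpow_neg hδ.le, rpow_neg hr.le, rpow_sub_one hr.ne', rpow_add_one hδ.ne']
    field_simp
  have herr_nonneg : 0 ≤ p / (p + 1) * (δ / r) := by positivity
  rw [abs_sub_le_iff]
  constructor
  · calc δ ^ (-p) * r ^ (-p) * I - p⁻¹
        ≤ δ ^ (-p) * r ^ (-p) * (r ^ p * (δ ^ p / p)
          + p * r ^ (p - 1) * (δ ^ (p + 1) / (p + 1))) - p⁻¹ := by gcongr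
      _ = p / (p + 1) * (δ / r) := by rw [mul_add, hmain, herr]; ring
  · have := mul_le_mul_of_nonneg_left hlower hc.le
    rw [hmain] at this
    linarith

end LocalScaling

/-- Rate of convergence of `n^{H-1/2} s^{1/2-H} K_H(r+s/n, r)` to `β_{H,1}`, `H > 1/2`. -/
theorem stmt11 (H CH : ℝ) (hH : 1 / 2 < H) (hH1 : H < 1) (hCH : 0 < CH)
    (K : ℝ → ℝ → ℝ)
    (hK : ∀ s t : ℝ, 0 < s → s ≤ t →
      K t s = CH * s ^ ((1 : ℝ) / 2 - H)
        * ∫ u in s..t, (u - s) ^ (H - 3 / 2) * u ^ (H - 1 / 2)) :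
    ∃ C : ℝ, 0 < C ∧ ∀ (r s : ℝ) (n : ℕ), 0 < r → 0 < s → 1 ≤ n →
      |(n : ℝ) ^ (H - 1 / 2) * s ^ ((1 : ℝ) / 2 - H) * K (r + s / (n : ℝ)) r
        - CH * (H - 1 / 2)⁻¹| ≤ C * (s / (r * (n : ℝ))) := by
  obtain ⟨p, rfl⟩ : ∃ p, H = p + 1 / 2 := ⟨H - 1 / 2, by ring⟩
  have hp0 : 0 < p := by linarith
  refine ⟨CH * (p / (p + 1)), by positivity, fun r s n hr hs hn => ?_⟩
  have hn0 : (0 : ℝ) < n := Nat.cast_pos.mpr hn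
  have hδ : 0 < s / n := div_pos hs hn0
  have hscale : (n : ℝ) ^ p * s ^ (-p) = (s / n) ^ (-p) := by
    rw [div_rpow hs.le hn0.le, rpow_neg hs.le, rpow_neg hn0.le]
    field_simp
  rw [hK r _ hr (by linarith), add_sub_cancel_right, show (1 : ℝ) / 2 - (p + 1 / 2) = -p by ring,
    show p + 1 / 2 - 3 / 2 = p - 1 by ring]
  calc |(n : ℝ) ^ p * s ^ (-p) * (CH * r ^ (-p) * ∫ u in r..r + s / n, (u - r) ^ (p - 1) * u ^ p)
        - CH * p⁻¹|
      = CH * |(s / n) ^ (-p) * r ^ (-p) * (∫ u in r..r + s / n, (u - r) ^ (p - 1) * u ^ p)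
        - p⁻¹| := by
        rw [← hscale]
        conv_rhs => rw [← abs_of_pos hCH, ← abs_mul]
        congr 1
        ring
    _ ≤ CH * (p / (p + 1) * (s / n / r)) := by
        gcongr
        exact abs_rpow_neg_mul_integral_sub_inv_le hp0 (by linarith) hr hδ
    _ = CH * (p / (p + 1)) * (s / (r * n)) := by
        rw [div_div, mul_comm (n : ℝ)]; ring
end

section
/- Fix $H \in (0,1)$ and constants as follows: $\beta_{H,1} > 0$, $\beta_{H,2} := (2H)^{-1}\beta_{H,1}^2$, and $\beta_{H,3}(s_1, s_2) := \mathcal{C}_H^2 |H-1/2|^{-2} \int_0^\infty ((\theta+s_1)^{H-1/2} - (\theta+s_2)^{H-1/2})^2 \, d\theta$. If $H > 1/3$ and $f, g : \mathbb{R} \to \mathbb{R}$ satisfy $\int_{\mathbb{R}} |f(x)|(1+|x|)dx < \infty$ and $\int_{\mathbb{R}} |g(x)|(1+|x|)dx < \infty$, then the integral $\int_{\mathbb{R}_+^2} \int_{\mathbb{R}} \int_{\mathbb{R}^2} \eta^2 |f(x) g(\tilde{x})| \, |e^{\mathbf{i}\eta x} - 1| \, |1 - e^{-\mathbf{i}\eta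 \tilde{x}}| (s_1 s_2)^{H-1/2} e^{-\frac{1}{2}(\beta_{H,2}(s_1^{2H}+s_2^{2H}) + \beta_{H,3}(s_1,s_2))\eta^2} \, dx \, d\tilde{x} \, d\eta \, ds_1 \, ds_2$ is finite. -/
/-!
Since `β_{H,3} ≥ 0` it can be dropped, and `|e^{iηx} - 1| ≤ 2 (1 + |x|) min(1, |η|)`, so the
`x, x'` integrals produce the two weighted `L¹` norms of `f` and `g` and, for fixed `η`, the
integrand factorises in `(s₁, s₂)`. Integrating the `s`'s first (Tonelli),
`∫₀^∞ s^{H-1/2} e^{-b η² s^{2H}} ds = C |η|^{-1-1/(2H)}`, which leaves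
`∫ min(1, |η|)² |η|^{-1/H} dη`: finite at `0` because `H > 1/3` and at infinity because `H < 1`.
-/

open MeasureTheory Real Set
open scoped ENNReal

lemma norm_cexp_I_mul_sub_one_le_min (θ : ℝ) :
    ‖Complex.exp (Complex.I * θ) - 1‖ ≤ min 2 |θ| := by
  refine le_min ?_ ?_
  · calc _ ≤ ‖Complex.exp (Complex.I * θ)‖ + ‖(1 : ℂ)‖ := norm_sub_le _ _
      _ = 2 := by rw [Complex.norm_exp_I_mul_ofReal]; norm_num
  · simpa using Real.norm_exp_I_mul_ofReal_sub_one_le (x := θ)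

lemma norm_cexp_I_mul_mul_sub_one_le (η x : ℝ) :
    ‖Complex.exp (Complex.I * η * x) - 1‖ ≤ 2 * (1 + |x|) * min 1 |η| := by
  have h := norm_cexp_I_mul_sub_one_le_min (η * x)
  push_cast at h
  rw [← mul_assoc, abs_mul] at h
  rcases le_total |η| 1 with hη | hη
  · rw [min_eq_right hη]
    nlinarith [min_le_right 2 (|η| * |x|), abs_nonneg η, abs_nonneg x]
  · rw [min_eq_left hη]
    nlinarith [min_le_left 2 (|η| * |x|), abs_nonneg x]

lemma sq_mul_min_one_sq_mul_rpow {t : ℝ} (ht : 0 < t) (c : ℝ) :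
    t ^ 2 * min 1 t ^ 2 * t ^ (c - 2) = min (t ^ c) (t ^ (c + 2)) := by
  have h2 : t ^ 2 * t ^ (c - 2) = t ^ c := by
    rw [← rpow_natCast, ← rpow_add ht]; norm_num
  rcases le_total t 1 with h | h
  · rw [min_eq_right h, min_eq_right (rpow_le_rpow_of_exponent_ge ht h (by linarith)),
      mul_right_comm, h2, ← rpow_natCast, ← rpow_add ht, Nat.cast_ofNat]
  · rw [min_eq_left h, min_eq_left (rpow_le_rpow_of_exponent_le h (by linarith)), one_pow,
      mul_one, h2]

lemma integrableOn_Ioi_min_rpow {a b : ℝ} (ha : -1 < a) (hb : b < -1) :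
    IntegrableOn (fun t : ℝ => min (t ^ a) (t ^ b)) (Ioi 0) := by
  have hmeas : AEStronglyMeasurable (fun t : ℝ => min (t ^ a) (t ^ b)) := by fun_prop
  have hnorm : ∀ t ∈ Ioi (0 : ℝ), ‖min (t ^ a) (t ^ b)‖ = min (t ^ a) (t ^ b) := fun t ht =>
    Real.norm_of_nonneg (le_min (rpow_nonneg (le_of_lt ht) _) (rpow_nonneg (le_of_lt ht) _))
  rw [← Ioc_union_Ioi_eq_Ioi zero_le_one]
  refine IntegrableOn.union ?_ ?_
  · have : IntegrableOn (fun t : ℝ => t ^ a) (Ioc 0 1) := by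
      rw [← intervalIntegrable_iff_integrableOn_Ioc_of_le zero_le_one]
      exact intervalIntegral.intervalIntegrable_rpow' ha
    refine this.mono' hmeas.restrict ?_
    filter_upwards [ae_restrict_mem measurableSet_Ioc] with t ht
    rw [hnorm t ht.1]; exact min_le_left _ _
  · refine (integrableOn_Ioi_rpow_of_lt hb zero_lt_one).mono' hmeas.restrict ?_
    filter_upwards [ae_restrict_mem measurableSet_Ioi] with t ht
    rw [hnorm t (mem_Ioi.2 (zero_lt_one.trans ht))]; exact min_le_right _ _

lemma lintegral_rpow_mul_exp_neg_mul_rpow {p q b : ℝ} (hp : 0 < p) (hq : -1 < q) (hb : 0 < b) :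
    ∫⁻ x in Ioi (0 : ℝ), ENNReal.ofReal (x ^ q * exp (-b * x ^ p)) =
      ENNReal.ofReal (b ^ (-(q + 1) / p) * (1 / p) * Gamma ((q + 1) / p)) := by
  rw [← integral_rpow_mul_exp_neg_mul_rpow hp hq hb, ofReal_integral_eq_lintegral_ofReal
    (integrableOn_rpow_mul_exp_neg_mul_rpow hq hp hb)]
  filter_upwards [ae_restrict_mem measurableSet_Ioi] with x hx
  exact mul_nonneg (rpow_nonneg (le_of_lt hx) _) (exp_nonneg _)

lemma lintegral_lintegral_lintegral_mul_mul {α β : Type*} [MeasurableSpace α] [MeasurableSpace β]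
    {μ : Measure α} {ν : Measure β} [SFinite μ] [SFinite ν] {u : β → ℝ≥0∞} {v : α → β → ℝ≥0∞}
    (hu : Measurable u) (hv : Measurable (Function.uncurry v)) :
    ∫⁻ s₁, ∫⁻ s₂, ∫⁻ η, u η * v s₁ η * v s₂ η ∂ν ∂μ ∂μ
      = ∫⁻ η, u η * (∫⁻ s, v s η ∂μ) ^ 2 ∂ν := by
  set V := fun η => ∫⁻ s, v s η ∂μ
  have hV : Measurable V := hv.lintegral_prod_left'
  have hv₂ : ∀ η, Measurable fun s => v s η := fun η => hv.comp (measurable_prodMk_right)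
  calc _ = ∫⁻ s₁, ∫⁻ η, u η * v s₁ η * V η ∂ν ∂μ := by
        refine lintegral_congr fun s₁ => ?_
        rw [lintegral_lintegral_swap (by fun_prop)]
        exact lintegral_congr fun η => lintegral_const_mul _ (hv₂ η)
    _ = ∫⁻ η, ∫⁻ s₁, u η * v s₁ η * V η ∂μ ∂ν := lintegral_lintegral_swap (by fun_prop)
    _ = _ := by
        refine lintegral_congr fun η => ?_
        rw [lintegral_mul_const _ ((hv₂ η).const_mul _), lintegral_const_mul _ (hv₂ η)]
        ring

lemma ofReal_integrand_le_separated {H β₂ β₃ : ℝ} (hβ₃ : 0 ≤ β₃) {s₁ s₂ : ℝ} (hs₁ : 0 < s₁) (hs₂ : 0 < s₂)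
    (a c η x y : ℝ) :
    ENNReal.ofReal (η ^ 2 * |a * c|
        * ‖Complex.exp (Complex.I * η * x) - 1‖
        * ‖1 - Complex.exp (-(Complex.I * η * y))‖
        * (s₁ * s₂) ^ (H - 1 / 2)
        * exp (-(1 / 2) * (β₂ * (s₁ ^ (2 * H) + s₂ ^ (2 * H)) + β₃) * η ^ 2))
      ≤ ENNReal.ofReal (4 * η ^ 2 * min 1 |η| ^ 2)
        * ENNReal.ofReal (s₁ ^ (H - 1 / 2) * exp (-(β₂ / 2 * η ^ 2) * s₁ ^ (2 * H)))
        * ENNReal.ofReal (s₂ ^ (H - 1 / 2) * exp (-(β₂ / 2 * η ^ 2) * s₂ ^ (2 * H)))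
        * (ENNReal.ofReal (|a| * (1 + |x|)) * ENNReal.ofReal (|c| * (1 + |y|))) := by
  have hexp : exp (-(1 / 2) * (β₂ * (s₁ ^ (2 * H) + s₂ ^ (2 * H)) + β₃) * η ^ 2)
      ≤ exp (-(β₂ / 2 * η ^ 2) * s₁ ^ (2 * H)) * exp (-(β₂ / 2 * η ^ 2) * s₂ ^ (2 * H)) := by
    rw [← exp_add]
    exact exp_le_exp.2 (by nlinarith [mul_nonneg hβ₃ (sq_nonneg η)])
  have hx := norm_cexp_I_mul_mul_sub_one_le η x
  have hy : ‖1 - Complex.exp (-(Complex.I * η * y))‖ ≤ 2 * (1 + |y|) * min 1 |η| := by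
    have := norm_cexp_I_mul_mul_sub_one_le (-η) y
    rwa [abs_neg, Complex.ofReal_neg, mul_neg, neg_mul, ← norm_neg, neg_sub] at this
  have hs : (s₁ * s₂) ^ (H - 1 / 2) = s₁ ^ (H - 1 / 2) * s₂ ^ (H - 1 / 2) :=
    mul_rpow hs₁.le hs₂.le
  rw [← ENNReal.ofReal_mul (by positivity), ← ENNReal.ofReal_mul (by positivity),
    ← ENNReal.ofReal_mul (by positivity), ← ENNReal.ofReal_mul (by positivity)]
  refine ENNReal.ofReal_le_ofReal ?_
  calc _ ≤ η ^ 2 * (|a| * |c|) * (2 * (1 + |x|) * min 1 |η|) * (2 * (1 + |y|) * min 1 |η|)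
        * (s₁ ^ (H - 1 / 2) * s₂ ^ (H - 1 / 2))
        * (exp (-(β₂ / 2 * η ^ 2) * s₁ ^ (2 * H)) * exp (-(β₂ / 2 * η ^ 2) * s₂ ^ (2 * H))) := by
        rw [abs_mul, hs]; gcongr
    _ = _ := by ring

lemma lintegral_weight_mul_sq_lintegral_lt_top {H b : ℝ} (hH : 1 / 3 < H) (hH1 : H < 1)
    (hb : 0 < b) :
    ∫⁻ η : ℝ, ENNReal.ofReal (4 * η ^ 2 * min 1 |η| ^ 2)
      * (∫⁻ s in Ioi (0 : ℝ), ENNReal.ofReal (s ^ (H - 1 / 2) * exp (-(b * η ^ 2) * s ^ (2 * H))))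
        ^ 2 < ⊤ := by
  have hH0 : 0 < H := by linarith
  have hr : 0 < (H - 1 / 2 + 1) / (2 * H) := by apply div_pos <;> linarith
  set e := -(H - 1 / 2 + 1) / (2 * H)
  set G := 1 / (2 * H) * Gamma ((H - 1 / 2 + 1) / (2 * H))
  have he : -1 / H - 2 = ((2 : ℕ) * e) * (2 : ℕ) := by simp only [e]; field_simp; ring
  have hpt : ∀ η : ℝ, ENNReal.ofReal (4 * η ^ 2 * min 1 |η| ^ 2)
      * (∫⁻ s in Ioi (0 : ℝ), ENNReal.ofReal (s ^ (H - 1 / 2) * exp (-(b * η ^ 2) * s ^ (2 * H))))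
        ^ 2 ≤ ENNReal.ofReal (4 * (b ^ e * G) ^ 2 * min (|η| ^ (-1 / H)) (|η| ^ (-1 / H + 2))) := by
    intro η
    rcases eq_or_ne η 0 with rfl | hη
    · simp
    have ht : 0 < |η| := abs_pos.2 hη
    rw [lintegral_rpow_mul_exp_neg_mul_rpow (by positivity) (by linarith) (by positivity),
      ← ENNReal.ofReal_pow (by positivity), ← ENNReal.ofReal_mul (by positivity)]
    refine ENNReal.ofReal_le_ofReal (le_of_eq ?_)
    rw [← sq_mul_min_one_sq_mul_rpow ht, sub_eq_add_neg, ← sub_eq_add_neg, he,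
      rpow_mul_natCast ht.le, rpow_natCast_mul ht.le, sq_abs, mul_rpow hb.le (sq_nonneg η)]
    ring
  refine (lintegral_mono hpt).trans_lt (Integrable.lintegral_lt_top (Integrable.const_mul ?_ _))
  have hmin := integrableOn_Ioi_min_rpow (a := -1 / H + 2) (b := -1 / H)
    (by rw [div_add' _ _ _ hH0.ne', lt_div_iff₀ hH0]; linarith)
    (by rw [div_lt_iff₀ hH0]; linarith)
  simpa [min_comm] using
    (integrable_fun_norm_addHaar volume (E := ℝ)
      (f := fun t => min (t ^ (-1 / H)) (t ^ (-1 / H + 2)))).2 (by simpa [min_comm] using hmin)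

theorem stmt12_general (H CH β1 : ℝ) (hH : 1 / 3 < H) (hH1 : H < 1)
    (hβ1 : 0 < β1)
    (β2 : ℝ) (hβ2 : β2 = (2 * H)⁻¹ * β1 ^ 2)
    (f g : ℝ → ℝ)
    (hf : Integrable (fun x => |f x| * (1 + |x|)))
    (hg : Integrable (fun x => |g x| * (1 + |x|))) :
    (∫⁻ s₁ in Set.Ioi (0 : ℝ), ∫⁻ s₂ in Set.Ioi (0 : ℝ), ∫⁻ η : ℝ, ∫⁻ x : ℝ, ∫⁻ x' : ℝ,
      ENNReal.ofReal (η ^ 2 * |f x * g x'|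
        * ‖Complex.exp (Complex.I * η * x) - 1‖
        * ‖1 - Complex.exp (-(Complex.I * η * x'))‖
        * (s₁ * s₂) ^ (H - 1 / 2)
        * Real.exp (-(1 / 2) * (β2 * (s₁ ^ (2 * H) + s₂ ^ (2 * H))
            + CH ^ 2 * (|H - 1 / 2|⁻¹) ^ 2
              * ∫ θ in Set.Ioi (0 : ℝ),
                  ((θ + s₁) ^ (H - 1 / 2) - (θ + s₂) ^ (H - 1 / 2)) ^ 2) * η ^ 2)))
    < ⊤ := by
  have hb : 0 < β2 / 2 := by
    rw [hβ2]; have : 0 < H := by linarith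
    positivity
  have hβ3 (s₁ s₂ : ℝ) : 0 ≤ CH ^ 2 * (|H - 1 / 2|⁻¹) ^ 2
      * ∫ θ in Ioi (0 : ℝ), ((θ + s₁) ^ (H - 1 / 2) - (θ + s₂) ^ (H - 1 / 2)) ^ 2 :=
    mul_nonneg (by positivity) (integral_nonneg fun θ => sq_nonneg _)
  set L := (∫⁻ x, ENNReal.ofReal (|f x| * (1 + |x|))) * ∫⁻ x, ENNReal.ofReal (|g x| * (1 + |x|))
  have hL : L < ⊤ := ENNReal.mul_lt_top hf.lintegral_lt_top hg.lintegral_lt_top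
  calc _ ≤ ∫⁻ s₁ in Ioi (0 : ℝ), ∫⁻ s₂ in Ioi (0 : ℝ), ∫⁻ η : ℝ,
        ENNReal.ofReal (4 * η ^ 2 * min 1 |η| ^ 2)
          * ENNReal.ofReal (s₁ ^ (H - 1 / 2) * exp (-(β2 / 2 * η ^ 2) * s₁ ^ (2 * H)))
          * ENNReal.ofReal (s₂ ^ (H - 1 / 2) * exp (-(β2 / 2 * η ^ 2) * s₂ ^ (2 * H))) * L := by
        refine setLIntegral_mono' measurableSet_Ioi fun s₁ hs₁ =>
          setLIntegral_mono' measurableSet_Ioi fun s₂ hs₂ => lintegral_mono fun η => ?_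
        refine (lintegral_mono fun x => lintegral_mono fun x' =>
          ofReal_integrand_le_separated (hβ3 s₁ s₂) hs₁ hs₂ _ _ η x x').trans_eq ?_
        simp_rw [lintegral_const_mul' _ _ (ENNReal.mul_ne_top (ENNReal.mul_ne_top
          ENNReal.ofReal_ne_top ENNReal.ofReal_ne_top) ENNReal.ofReal_ne_top)]
        rw [lintegral_lintegral_mul hf.aemeasurable.ennreal_ofReal hg.aemeasurable.ennreal_ofReal]
    _ = (∫⁻ η : ℝ, ENNReal.ofReal (4 * η ^ 2 * min 1 |η| ^ 2)
          * (∫⁻ s in Ioi (0 : ℝ),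
              ENNReal.ofReal (s ^ (H - 1 / 2) * exp (-(β2 / 2 * η ^ 2) * s ^ (2 * H)))) ^ 2) * L := by
        simp_rw [lintegral_mul_const' _ _ hL.ne]
        rw [lintegral_lintegral_lintegral_mul_mul (by fun_prop) (by fun_prop)]
    _ < ⊤ := ENNReal.mul_lt_top (lintegral_weight_mul_sq_lintegral_lt_top hH hH1 hb) hL

/-- Absolute convergence of the integral defining `𝒜_H[f,g]` when `H > 1/3`
and `f, g ∈ Ξ₁`. -/
theorem stmt12 (H CH β1 : ℝ) (hH : 1 / 3 < H) (hH1 : H < 1)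
    (hCH : 0 < CH) (hβ1 : 0 < β1)
    (β2 : ℝ) (hβ2 : β2 = (2 * H)⁻¹ * β1 ^ 2)
    (f g : ℝ → ℝ)
    (hf : Integrable (fun x => |f x| * (1 + |x|)))
    (hg : Integrable (fun x => |g x| * (1 + |x|))) :
    (∫⁻ s₁ in Set.Ioi (0 : ℝ), ∫⁻ s₂ in Set.Ioi (0 : ℝ), ∫⁻ η : ℝ, ∫⁻ x : ℝ, ∫⁻ x' : ℝ,
      ENNReal.ofReal (η ^ 2 * |f x * g x'|
        * ‖Complex.exp (Complex.I * η * x) - 1‖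
        * ‖1 - Complex.exp (-(Complex.I * η * x'))‖
        * (s₁ * s₂) ^ (H - 1 / 2)
        * Real.exp (-(1 / 2) * (β2 * (s₁ ^ (2 * H) + s₂ ^ (2 * H))
            + CH ^ 2 * (|H - 1 / 2|⁻¹) ^ 2
              * ∫ θ in Set.Ioi (0 : ℝ),
                  ((θ + s₁) ^ (H - 1 / 2) - (θ + s₂) ^ (H - 1 / 2)) ^ 2) * η ^ 2)))
    < ⊤ :=
  stmt12_general H CH β1 hH hH1 hβ1 β2 hβ2 f g hf hg
end
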